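/- arXiv:2206.03821 — 3 statements merged into one kernel-verified Lean document; each statement's English description precedes it below -/
import Mathlib

section
/- Let φ ∈ M satisfy ∫₁^∞ dr/(r·φ²(r)) < ∞. Then for every integer p ≥ 0 and dimension n ≥ 1, with s = p + 1 + n/2, the weight function μ(ξ,η) = (1+|ξ|²+|η|)^{s/2} φ((1+|ξ|²+|η|)^{1/2}) satisfies ∫_{ℝⁿ×ℝ} (1+|ξ|²+|η|)^{|α|+2β} / μ(ξ,η)² dξ dη < ∞ whenever |α| + 2β ≤ p, where α is a multi-index in ξ and β ≥ 0 an integer. -/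
/-!
Write `t = 1 + |ξ|² + |η|`. Since `|α| + 2β ≤ p`, the integrand is at most
`t^{-(1+n/2)} / φ(√t)²`. For any `g ≥ 0`, integrating out `η` by symmetry and then swapping
the order of integration gives
`∫∫ g(1 + |ξ|² + |η|) = 2 ∫ g(t) |{ξ : 1 + |ξ|² < t}| dt ≤ 2 |B₁| ∫_{t>1} t^{n/2} g(t) dt`.
Here the right-hand side is `2 |B₁| ∫_{t>1} dt / (t φ(√t)²)`, which the substitution `t = r²`
turns into `4 |B₁| ∫_{r>1} dr / (r φ(r)²) < ∞`.
-/

open Filter Topology Set MeasureTheory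
open scoped ENNReal

def SlowlyVarying (φ : ℝ → ℝ) : Prop :=
  ∀ l : ℝ, 0 < l → Tendsto (fun r => φ (l * r) / φ r) atTop (𝓝 1)

def MemM (φ : ℝ → ℝ) : Prop :=
  Measurable φ ∧ (∀ r, 1 ≤ r → 0 < φ r) ∧
  (∀ c : ℝ, 1 < c → ∃ m > 0, ∃ M : ℝ, ∀ r ∈ Icc (1:ℝ) c, m ≤ φ r ∧ φ r ≤ M) ∧
  SlowlyVarying φ

/-- The squared anisotropic Hörmander weight `μ(ξ,η)²`. -/
noncomputable def wt (n : ℕ) (s : ℝ) (φ : ℝ → ℝ)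
    (q : EuclideanSpace ℝ (Fin n) × ℝ) : ℝ :=
  (1 + ‖q.1‖ ^ 2 + |q.2|) ^ s * (φ ((1 + ‖q.1‖ ^ 2 + |q.2|) ^ ((1:ℝ)/2))) ^ 2

theorem lintegral_comp_abs (f : ℝ → ℝ≥0∞) :
    ∫⁻ x, f |x| = 2 * ∫⁻ x in Ioi 0, f x := by
  have h_pos : ∫⁻ x in Ioi 0, f |x| = ∫⁻ x in Ioi 0, f x :=
    setLIntegral_congr_fun measurableSet_Ioi fun x hx => by rw [abs_of_pos hx]
  have h_neg : ∫⁻ x in Iio 0, f |x| = ∫⁻ x in Ioi 0, f x := by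
    have := (Measure.measurePreserving_neg (volume : Measure ℝ)).setLIntegral_comp_preimage_emb
      (Homeomorph.neg ℝ).measurableEmbedding (fun x => f |x|) (Ioi 0)
    simpa only [abs_neg, neg_preimage, neg_Ioi, neg_zero, h_pos] using this
  rw [← setLIntegral_univ, ← Iio_union_Ici, lintegral_union measurableSet_Ici
    (Iio_disjoint_Ici le_rfl), setLIntegral_congr Ioi_ae_eq_Ici.symm, h_neg, h_pos, two_mul]

theorem setLIntegral_Ioi_zero_comp_add (f : ℝ → ℝ≥0∞) (a : ℝ) :
    ∫⁻ x in Ioi 0, f (a + x) = ∫⁻ t in Ioi a, f t := by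
  have := (measurePreserving_add_left (volume : Measure ℝ) a).setLIntegral_comp_preimage_emb
    (measurableEmbedding_addLeft a) f (Ioi a)
  simpa only [preimage_const_add_Ioi, sub_self] using this

theorem lintegral_comp_add_abs (f : ℝ → ℝ≥0∞) (a : ℝ) :
    ∫⁻ x, f (a + |x|) = 2 * ∫⁻ t in Ioi a, f t := by
  rw [lintegral_comp_abs (fun x => f (a + x)), setLIntegral_Ioi_zero_comp_add]

theorem lintegral_setLIntegral_Ioi {X : Type*} [MeasurableSpace X] (μ : Measure X) [SFinite μ]
    {F : X → ℝ} (hF : Measurable F) {g : ℝ → ℝ≥0∞} (hg : Measurable g) :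
    ∫⁻ x, (∫⁻ t in Ioi (F x), g t) ∂μ = ∫⁻ t, μ {x | F x < t} * g t := by
  have hS : MeasurableSet {p : X × ℝ | F p.1 < p.2} :=
    measurableSet_lt (hF.comp measurable_fst) measurable_snd
  simp_rw [← lintegral_indicator measurableSet_Ioi]
  rw [lintegral_lintegral_swap]
  · refine lintegral_congr fun t => ?_
    rw [mul_comm, ← lintegral_indicator_const (measurableSet_lt hF measurable_const)]
    rfl
  · exact ((hg.comp measurable_snd).indicator hS).aemeasurable

theorem lintegral_prod_comp_add_abs {X : Type*} [MeasurableSpace X] (μ : Measure X) [SFinite μ]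
    {F : X → ℝ} (hF : Measurable F) {g : ℝ → ℝ≥0∞} (hg : Measurable g) :
    ∫⁻ q, g (F q.1 + |q.2|) ∂(μ.prod volume) = 2 * ∫⁻ t, μ {x | F x < t} * g t := by
  have hmeas : Measurable fun q : X × ℝ => g (F q.1 + |q.2|) := by fun_prop
  rw [lintegral_prod _ hmeas.aemeasurable]
  simp_rw [lintegral_comp_add_abs g]
  rw [lintegral_const_mul' _ _ ENNReal.ofNat_ne_top, lintegral_setLIntegral_Ioi μ hF hg]

theorem setOf_one_add_sq_norm_lt_eq_empty {E : Type*} [NormedAddCommGroup E] {t : ℝ}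
    (ht : t ≤ 1) :
    {ξ : E | 1 + ‖ξ‖ ^ 2 < t} = ∅ :=
  eq_empty_of_forall_notMem fun ξ (hξ : 1 + ‖ξ‖ ^ 2 < t) => by nlinarith [sq_nonneg ‖ξ‖]

section Haar

variable {E : Type*} [NormedAddCommGroup E] [NormedSpace ℝ E] [MeasurableSpace E] [BorelSpace E]
  [FiniteDimensional ℝ E] (μ : Measure E) [μ.IsAddHaarMeasure]

theorem addHaar_setOf_one_add_sq_norm_lt_le (t : ℝ) :
    μ {ξ | 1 + ‖ξ‖ ^ 2 < t} ≤
      ENNReal.ofReal (t ^ ((Module.finrank ℝ E : ℝ) / 2)) * μ (Metric.ball 0 1) := by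
  rcases le_or_gt t 1 with ht | ht
  · simp [setOf_one_add_sq_norm_lt_eq_empty ht]
  have h_sub : {ξ : E | 1 + ‖ξ‖ ^ 2 < t} ⊆ Metric.ball 0 (√t) :=
    fun ξ (hξ : 1 + ‖ξ‖ ^ 2 < t) => by
    rw [mem_ball_zero_iff, Real.lt_sqrt (norm_nonneg ξ)]
    linarith
  calc μ {ξ | 1 + ‖ξ‖ ^ 2 < t} ≤ μ (Metric.ball 0 (√t)) := measure_mono h_sub
    _ = _ := by
      rw [Measure.addHaar_ball_of_pos μ 0 (Real.sqrt_pos.2 (by linarith)), Real.sqrt_eq_rpow,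
        ← Real.rpow_natCast, ← Real.rpow_mul (by linarith), one_div_mul_eq_div]

theorem lintegral_comp_one_add_sq_norm_add_abs_le {g : ℝ → ℝ≥0∞} (hg : Measurable g) :
    ∫⁻ q, g (1 + ‖q.1‖ ^ 2 + |q.2|) ∂(μ.prod volume) ≤
      2 * μ (Metric.ball 0 1) *
        ∫⁻ t in Ioi 1, ENNReal.ofReal (t ^ ((Module.finrank ℝ E : ℝ) / 2)) * g t := by
  have hF : Measurable fun ξ : E => 1 + ‖ξ‖ ^ 2 := by fun_prop
  have h_supp : (fun t => μ {ξ | 1 + ‖ξ‖ ^ 2 < t} * g t).support ⊆ Ioi 1 := fun t ht => by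
    by_contra h
    simp [setOf_one_add_sq_norm_lt_eq_empty (not_lt.1 h)] at ht
  rw [lintegral_prod_comp_add_abs μ hF hg, ← setLIntegral_eq_of_support_subset h_supp, mul_assoc,
    ← lintegral_const_mul' _ _ measure_ball_lt_top.ne]
  gcongr 2 * ∫⁻ t in Ioi 1, ?_ with t
  rw [← mul_assoc, mul_comm (μ (Metric.ball 0 1))]
  gcongr ?_ * _
  exact addHaar_setOf_one_add_sq_norm_lt_le μ t

end Haar

theorem lintegral_Ioi_one_div_mul_comp_sqrt (h : ℝ → ℝ) :
    ∫⁻ t in Ioi 1, ENNReal.ofReal (1 / (t * h √t)) =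
      2 * ∫⁻ r in Ioi 1, ENNReal.ofReal (1 / (r * h r)) := by
  have h_img : (fun r : ℝ => r ^ 2) '' Ioi 1 = Ioi 1 := by
    ext t
    refine ⟨?_, fun ht => ⟨√t, ?_, Real.sq_sqrt (by linarith [mem_Ioi.1 ht])⟩⟩
    · rintro ⟨r, hr, rfl⟩
      exact one_lt_pow₀ (mem_Ioi.1 hr) two_ne_zero
    · rw [mem_Ioi, Real.lt_sqrt zero_le_one]
      simpa using ht
  conv_lhs => rw [← h_img]
  rw [lintegral_image_eq_lintegral_deriv_mul_of_monotoneOn measurableSet_Ioi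
    (fun r _ => (hasDerivAt_pow 2 r).hasDerivWithinAt)
    (fun a ha b _ hab => pow_le_pow_left₀ (by linarith [mem_Ioi.1 ha]) hab 2),
    ← lintegral_const_mul' _ _ ENNReal.ofNat_ne_top]
  refine setLIntegral_congr_fun measurableSet_Ioi fun r hr => ?_
  have hr : 0 < r := by linarith [mem_Ioi.1 hr]
  rw [Real.sqrt_sq hr.le, Nat.cast_ofNat, pow_one, ← ENNReal.ofReal_mul (by positivity),
    ← ENNReal.ofReal_ofNat, ← ENNReal.ofReal_mul zero_le_two]
  congr 1
  field_simp

theorem rpow_div_wt_le (n p : ℕ) (φ : ℝ → ℝ) (q : EuclideanSpace ℝ (Fin n) × ℝ) {k : ℝ}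
    (hk : k ≤ p) :
    (1 + ‖q.1‖ ^ 2 + |q.2|) ^ k / wt n ((p : ℝ) + 1 + (n : ℝ) / 2) φ q ≤
      (1 + ‖q.1‖ ^ 2 + |q.2|) ^ (-(1 + (n : ℝ) / 2)) / φ √(1 + ‖q.1‖ ^ 2 + |q.2|) ^ 2 := by
  have ht : 1 ≤ 1 + ‖q.1‖ ^ 2 + |q.2| := by nlinarith [sq_nonneg ‖q.1‖, abs_nonneg q.2]
  rw [wt, ← Real.sqrt_eq_rpow, ← div_div, ← Real.rpow_sub (by linarith)]
  gcongr
  linarith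

theorem ofReal_rpow_half_mul_ofReal_rpow_div {t : ℝ} (ht : 0 < t) (a c : ℝ) :
    ENNReal.ofReal (t ^ (a / 2)) * ENNReal.ofReal (t ^ (-(1 + a / 2)) / c) =
      ENNReal.ofReal (1 / (t * c)) := by
  rw [← ENNReal.ofReal_mul (by positivity), ← mul_div_assoc, ← Real.rpow_add ht,
    show a / 2 + -(1 + a / 2) = -1 by ring, Real.rpow_neg_one, div_mul_eq_div_div, one_div]

theorem weight_integral_finite_general (n p : ℕ) (φ : ℝ → ℝ) (hφ : MemM φ)
    (hint : ∫⁻ r in Ioi (1:ℝ), ENNReal.ofReal (1 / (r * φ r ^ 2)) < ⊤)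
    (α : Fin n → ℕ) (β : ℕ) (hαβ : (∑ i, α i) + 2 * β ≤ p) :
    ∫⁻ q : EuclideanSpace ℝ (Fin n) × ℝ,
      ENNReal.ofReal ((1 + ‖q.1‖ ^ 2 + |q.2|) ^ ((((∑ i, α i) + 2 * β : ℕ)) : ℝ) /
        wt n ((p : ℝ) + 1 + (n : ℝ) / 2) φ q) < ⊤ := by
  set g : ℝ → ℝ≥0∞ := fun t => ENNReal.ofReal (t ^ (-(1 + (n : ℝ) / 2)) / φ √t ^ 2)
  have hg : Measurable g := by
    have hφm : Measurable φ := hφ.1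
    fun_prop
  calc _ ≤ ∫⁻ q : EuclideanSpace ℝ (Fin n) × ℝ, g (1 + ‖q.1‖ ^ 2 + |q.2|) :=
        lintegral_mono fun q =>
          ENNReal.ofReal_le_ofReal (rpow_div_wt_le n p φ q (by exact_mod_cast hαβ))
    _ ≤ 2 * volume (Metric.ball (0 : EuclideanSpace ℝ (Fin n)) 1) *
          ∫⁻ t in Ioi 1, ENNReal.ofReal (t ^ ((n : ℝ) / 2)) * g t := by
      have := lintegral_comp_one_add_sq_norm_add_abs_le
        (volume : Measure (EuclideanSpace ℝ (Fin n))) hg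
      rwa [finrank_euclideanSpace_fin, ← Measure.volume_eq_prod] at this
    _ = 2 * volume (Metric.ball (0 : EuclideanSpace ℝ (Fin n)) 1) *
          (2 * ∫⁻ r in Ioi 1, ENNReal.ofReal (1 / (r * φ r ^ 2))) := by
      rw [← lintegral_Ioi_one_div_mul_comp_sqrt (fun r => φ r ^ 2)]
      congr 1
      exact setLIntegral_congr_fun measurableSet_Ioi fun t ht =>
        ofReal_rpow_half_mul_ofReal_rpow_div (one_pos.trans ht) _ _
    _ < ⊤ := ENNReal.mul_lt_top (ENNReal.mul_lt_top ENNReal.ofNat_lt_top measure_ball_lt_top)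
      (ENNReal.mul_lt_top ENNReal.ofNat_lt_top hint)

/-- if `∫₁^∞ dr/(r φ²(r)) < ∞` and `s = p + 1 + n/2`, then
`∫ (1+|ξ|²+|η|)^{|α|+2β} / μ(ξ,η)² dξ dη < ∞` whenever `|α| + 2β ≤ p`. -/
theorem weight_integral_finite (n p : ℕ) (hn : 1 ≤ n) (φ : ℝ → ℝ) (hφ : MemM φ)
    (hint : ∫⁻ r in Ioi (1:ℝ), ENNReal.ofReal (1 / (r * φ r ^ 2)) < ⊤)
    (α : Fin n → ℕ) (β : ℕ) (hαβ : (∑ i, α i) + 2 * β ≤ p) :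
    ∫⁻ q : EuclideanSpace ℝ (Fin n) × ℝ,
      ENNReal.ofReal ((1 + ‖q.1‖ ^ 2 + |q.2|) ^ ((((∑ i, α i) + 2 * β : ℕ)) : ℝ) /
        wt n ((p : ℝ) + 1 + (n : ℝ) / 2) φ q) < ⊤ :=
  weight_integral_finite_general n p φ hφ hint α β hαβ
end

section
/- The condition ∫₁^∞ dr/(r φ²(r)) < ∞ is sharp for continuous embedding into bounded continuous functions: if φ ∈ M and the integral diverges, then there exists w ∈ H^{s,s/2;φ}(ℝ^{n+1}) with s = 1 + n/2 whose Fourier transform is nonnegative but not integrable, hence (1+|ξ|²+|η|)^{s/2} φ((1+|ξ|²+|η|)^{1/2}) fails the Cauchy–Schwarz dual condition ∫∫ (1+|ξ|²+|η|)^{-s} φ^{-2}((1+|ξ|²+|η|)^{1/2}) dξ dη = ∞. -/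
/-!
The integrand depends only on `ρ = 1 + |ξ|² + |η|`. For fixed `ξ`, the substitution
`η = r² - (1 + |ξ|²)` turns the `η`-integral into `∫_{r > √(1+|ξ|²)} 2r G(r²) dr`, where
`G(ρ) = ρ^{-s} φ(√ρ)^{-2}`. Exchanging the order of integration, each `r` is weighted by the volume
of `{ξ : 1 + |ξ|² < r²}`, which for `r ≥ 2` contains the ball of radius `r/2`, of volume `≍ rⁿ`.
Since `2r G(r²) rⁿ = 2 / (r φ(r)²)` for `s = 1 + n/2`, the integral dominates a multiple of
`∫_2^∞ dr / (r φ(r)²)`, which diverges because `φ` is bounded below on `[1, 2]`.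
-/

open Filter Topology Set MeasureTheory
open scoped ENNReal

open Real

theorem setLIntegral_Ioi_const_add_eq_sq {B : ℝ} (hB : 0 ≤ B) (g : ℝ → ℝ≥0∞) :
    ∫⁻ η in Ioi 0, g (B + η) = ∫⁻ r in Ioi √B, ENNReal.ofReal (2 * r) * g (r ^ 2) := by
  have himage : (fun r : ℝ => r ^ 2 - B) '' Ioi √B = Ioi 0 := by
    ext η
    simp only [mem_image, mem_Ioi]
    constructor
    · rintro ⟨r, hr, rfl⟩
      have := (sqrt_lt' ((sqrt_nonneg B).trans_lt hr)).mp hr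
      linarith
    · intro hη
      exact ⟨√(B + η), sqrt_lt_sqrt hB (by linarith), by rw [sq_sqrt (by linarith)]; ring⟩
  have hinj : InjOn (fun r : ℝ => r ^ 2 - B) (Ioi √B) := fun r hr r' hr' h => by
    have hr0 : 0 ≤ r := (sqrt_nonneg B).trans (le_of_lt hr)
    have hr0' : 0 ≤ r' := (sqrt_nonneg B).trans (le_of_lt hr')
    exact (pow_left_inj₀ hr0 hr0' two_ne_zero).mp (by simpa using h)
  rw [← himage, lintegral_image_eq_lintegral_abs_deriv_mul measurableSet_Ioi
    (fun r _ => ((hasDerivAt_pow 2 r).sub_const B).hasDerivWithinAt) hinj]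
  refine setLIntegral_congr_fun measurableSet_Ioi fun r hr => ?_
  have hr0 : 0 ≤ r := (sqrt_nonneg B).trans (le_of_lt hr)
  simp [abs_of_nonneg hr0]

theorem setLIntegral_Ioi_sqrt_le_lintegral_const_add_abs {B : ℝ} (hB : 0 ≤ B) (g : ℝ → ℝ≥0∞) :
    ∫⁻ r in Ioi √B, ENNReal.ofReal (2 * r) * g (r ^ 2) ≤ ∫⁻ η, g (B + |η|) := by
  calc ∫⁻ r in Ioi √B, ENNReal.ofReal (2 * r) * g (r ^ 2)
      = ∫⁻ η in Ioi 0, g (B + |η|) := by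
        rw [← setLIntegral_Ioi_const_add_eq_sq hB]
        exact setLIntegral_congr_fun measurableSet_Ioi fun η hη => by rw [abs_of_pos hη]
    _ ≤ ∫⁻ η, g (B + |η|) := setLIntegral_le_lintegral _ _

theorem lintegral_setLIntegral_Ioi_eq {E : Type*} [MeasurableSpace E] (μ : Measure E) [SFinite μ]
    {c : E → ℝ} (hc : Measurable c) {H : ℝ → ℝ≥0∞} (hH : Measurable H) :
    ∫⁻ x, (∫⁻ r in Ioi (c x), H r) ∂μ = ∫⁻ r, H r * μ {x | c x < r} := by
  set S := {p : E × ℝ | c p.1 < p.2}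
  have hS : MeasurableSet S := measurableSet_lt (hc.comp measurable_fst) measurable_snd
  calc ∫⁻ x, (∫⁻ r in Ioi (c x), H r) ∂μ
      = ∫⁻ x, (∫⁻ r, S.indicator (fun p => H p.2) (x, r)) ∂μ := by
        simp_rw [← lintegral_indicator measurableSet_Ioi]; rfl
    _ = ∫⁻ r, ∫⁻ x, S.indicator (fun p => H p.2) (x, r) ∂μ :=
        lintegral_lintegral_swap (f := fun x r => S.indicator (fun p => H p.2) (x, r))
          ((hH.comp measurable_snd).indicator hS).aemeasurable
    _ = ∫⁻ r, H r * μ {x | c x < r} := by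
        congr with r
        rw [← lintegral_indicator_const (measurableSet_lt hc measurable_const)]
        rfl

theorem ball_zero_half_subset {E : Type*} [SeminormedAddCommGroup E] {r : ℝ} (hr : 2 ≤ r) :
    Metric.ball (0 : E) (r / 2) ⊆ {ξ | √(1 + ‖ξ‖ ^ 2) < r} := fun ξ hξ => by
  rw [Metric.mem_ball, dist_zero_right] at hξ
  rw [mem_ofPred_eq, sqrt_lt' (by linarith)]
  nlinarith [norm_nonneg ξ]

section Radial

variable {E : Type*} [SeminormedAddCommGroup E] [MeasurableSpace E] [OpensMeasurableSpace E]
  (μ : Measure E) [SFinite μ] {G : ℝ → ℝ≥0∞}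

theorem lintegral_mul_measure_le_lintegral_prod (hG : Measurable G) :
    ∫⁻ r, ENNReal.ofReal (2 * r) * G (r ^ 2) * μ {ξ | √(1 + ‖ξ‖ ^ 2) < r}
      ≤ ∫⁻ q, G (1 + ‖q.1‖ ^ 2 + |q.2|) ∂μ.prod volume := by
  have hH : Measurable fun r : ℝ => ENNReal.ofReal (2 * r) * G (r ^ 2) := by fun_prop
  calc ∫⁻ r, ENNReal.ofReal (2 * r) * G (r ^ 2) * μ {ξ | √(1 + ‖ξ‖ ^ 2) < r}
      = ∫⁻ ξ, (∫⁻ r in Ioi √(1 + ‖ξ‖ ^ 2), ENNReal.ofReal (2 * r) * G (r ^ 2)) ∂μ :=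
        (lintegral_setLIntegral_Ioi_eq μ (by fun_prop) hH).symm
    _ ≤ ∫⁻ ξ, (∫⁻ η, G (1 + ‖ξ‖ ^ 2 + |η|)) ∂μ :=
        lintegral_mono fun ξ => setLIntegral_Ioi_sqrt_le_lintegral_const_add_abs (by positivity) G
    _ = ∫⁻ q, G (1 + ‖q.1‖ ^ 2 + |q.2|) ∂μ.prod volume :=
        (lintegral_prod (fun q : E × ℝ => G (1 + ‖q.1‖ ^ 2 + |q.2|))
          (by fun_prop)).symm

theorem setLIntegral_mul_measure_ball_le_lintegral_prod (hG : Measurable G) :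
    ∫⁻ r in Ioi 2, ENNReal.ofReal (2 * r) * G (r ^ 2) * μ (Metric.ball 0 (r / 2))
      ≤ ∫⁻ q, G (1 + ‖q.1‖ ^ 2 + |q.2|) ∂μ.prod volume :=
  calc _ ≤ ∫⁻ r in Ioi 2, ENNReal.ofReal (2 * r) * G (r ^ 2) * μ {ξ | √(1 + ‖ξ‖ ^ 2) < r} :=
        setLIntegral_mono' measurableSet_Ioi fun r hr => by
          gcongr; exact ball_zero_half_subset (le_of_lt hr)
    _ ≤ _ := (setLIntegral_le_lintegral _ _).trans (lintegral_mul_measure_le_lintegral_prod μ hG)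

end Radial

theorem setLIntegral_Ioi_eq_top_of_Ioc_ne_top (μ : Measure ℝ) {f : ℝ → ℝ≥0∞} {a b : ℝ}
    (hab : a ≤ b) (hf : ∫⁻ r in Ioi a, f r ∂μ = ⊤) (hfin : ∫⁻ r in Ioc a b, f r ∂μ ≠ ⊤) :
    ∫⁻ r in Ioi b, f r ∂μ = ⊤ := by
  rw [← Ioc_union_Ioi_eq_Ioi hab, lintegral_union measurableSet_Ioi Ioc_disjoint_Ioi_same] at hf
  exact (ENNReal.add_eq_top.mp hf).resolve_left hfin

theorem setLIntegral_Ioc_one_div_mul_sq_ne_top {φ : ℝ → ℝ} {a b m : ℝ} (ha : 0 < a)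
    (hm : 0 < m) (hφ : ∀ r ∈ Ioc a b, m ≤ φ r) :
    ∫⁻ r in Ioc a b, ENNReal.ofReal (1 / (r * φ r ^ 2)) ≠ ⊤ := by
  refine ne_top_of_le_ne_top (b := ∫⁻ _ in Ioc a b, ENNReal.ofReal (1 / (a * m ^ 2))) ?_ ?_
  · simp [Real.volume_Ioc, ENNReal.mul_eq_top]
  · refine setLIntegral_mono' measurableSet_Ioc fun r hr => ENNReal.ofReal_le_ofReal ?_
    have hmφ := hφ r hr
    gcongr
    exacts [(ha.trans hr.1).le, hr.1.le]

theorem two_mul_mul_inv_rpow_mul_sq_mul_half_pow (n : ℕ) {r : ℝ} (hr : 0 < r) (a : ℝ) :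
    2 * r * ((r ^ 2) ^ (1 + (n : ℝ) / 2) * a ^ 2)⁻¹ * (r / 2) ^ n
      = 2 / 2 ^ n * (1 / (r * a ^ 2)) := by
  have hpow : (r ^ 2) ^ (1 + (n : ℝ) / 2) = r ^ 2 * r ^ n := by
    rw [← rpow_natCast r 2, ← rpow_mul hr.le, ← rpow_natCast r n, ← rpow_add hr]
    congr 1
    ring
  rcases eq_or_ne a 0 with rfl | ha
  · simp
  · rw [hpow, div_pow]
    field_simp

theorem ofReal_mul_measure_ball_half_eq {E : Type*} [NormedAddCommGroup E] [NormedSpace ℝ E]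
    [MeasurableSpace E] [BorelSpace E] [FiniteDimensional ℝ E] (μ : Measure E)
    [μ.IsAddHaarMeasure] {n : ℕ} (hn : Module.finrank ℝ E = n) {r : ℝ} (hr : 0 < r) (a : ℝ) :
    ENNReal.ofReal (2 * r) * ENNReal.ofReal (((r ^ 2) ^ (1 + (n : ℝ) / 2) * a ^ 2)⁻¹)
        * μ (Metric.ball 0 (r / 2))
      = ENNReal.ofReal (2 / 2 ^ n) * μ (Metric.ball 0 1) * ENNReal.ofReal (1 / (r * a ^ 2)) := by
  rw [Measure.addHaar_ball_of_pos _ _ (half_pos hr), hn, ← ENNReal.ofReal_mul (by positivity),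
    ← mul_assoc, ← ENNReal.ofReal_mul (by positivity),
    two_mul_mul_inv_rpow_mul_sq_mul_half_pow n hr, ENNReal.ofReal_mul (by positivity),
    mul_right_comm]

theorem weight_integral_divergent_general (n : ℕ) (φ : ℝ → ℝ) (hφ : MemM φ)
    (hdiv : ∫⁻ r in Ioi (1:ℝ), ENNReal.ofReal (1 / (r * φ r ^ 2)) = ⊤) :
    ∫⁻ q : EuclideanSpace ℝ (Fin n) × ℝ,
      ENNReal.ofReal ((wt n (1 + (n : ℝ) / 2) φ q)⁻¹) = ⊤ := by
  obtain ⟨hφm, -, hφbdd, -⟩ := hφ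
  obtain ⟨m, hm, M, hmφ⟩ := hφbdd 2 one_lt_two
  have htail : ∫⁻ r in Ioi 2, ENNReal.ofReal (1 / (r * φ r ^ 2)) = ⊤ :=
    setLIntegral_Ioi_eq_top_of_Ioc_ne_top volume one_le_two hdiv <|
      setLIntegral_Ioc_one_div_mul_sq_ne_top one_pos hm fun r hr =>
        (hmφ r (Ioc_subset_Icc_self hr)).1
  set G : ℝ → ℝ≥0∞ := fun t =>
    ENNReal.ofReal ((t ^ (1 + (n : ℝ) / 2) * φ (t ^ ((1:ℝ) / 2)) ^ 2)⁻¹)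
  have hG : Measurable G := by fun_prop
  set κ := volume (Metric.ball (0 : EuclideanSpace ℝ (Fin n)) 1)
  have hκ : κ ≠ 0 := (Metric.measure_ball_pos _ _ one_pos).ne'
  refine eq_top_iff.mpr ?_
  calc ⊤ = ENNReal.ofReal (2 / 2 ^ n) * κ * ∫⁻ r in Ioi 2, ENNReal.ofReal (1 / (r * φ r ^ 2)) := by
        rw [htail, ENNReal.mul_top (mul_ne_zero (by positivity) hκ)]
    _ = ∫⁻ r in Ioi 2, ENNReal.ofReal (2 * r) * G (r ^ 2)
          * volume (Metric.ball (0 : EuclideanSpace ℝ (Fin n)) (r / 2)) := by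
        rw [← lintegral_const_mul' _ _ (by finiteness)]
        refine setLIntegral_congr_fun measurableSet_Ioi fun r (hr : 2 < r) => ?_
        have hr0 : 0 < r := by linarith
        rw [← ofReal_mul_measure_ball_half_eq _ finrank_euclideanSpace_fin hr0]
        simp only [G, ← sqrt_eq_rpow, sqrt_sq hr0.le]
    _ ≤ ∫⁻ q, G (1 + ‖q.1‖ ^ 2 + |q.2|) ∂volume.prod volume :=
        setLIntegral_mul_measure_ball_le_lintegral_prod volume hG
    _ = _ := by rw [← Measure.volume_eq_prod]; rfl

/-- sharpness of the integral condition — if `∫₁^∞ dr/(r φ²(r)) = ∞`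
then for `s = 1 + n/2` the dual Cauchy–Schwarz integral
`∫∫ (1+|ξ|²+|η|)^{-s} φ^{-2}((1+|ξ|²+|η|)^{1/2}) dξ dη` diverges. -/
theorem weight_integral_divergent (n : ℕ) (hn : 1 ≤ n) (φ : ℝ → ℝ) (hφ : MemM φ)
    (hdiv : ∫⁻ r in Ioi (1:ℝ), ENNReal.ofReal (1 / (r * φ r ^ 2)) = ⊤) :
    ∫⁻ q : EuclideanSpace ℝ (Fin n) × ℝ,
      ENNReal.ofReal ((wt n (1 + (n : ℝ) / 2) φ q)⁻¹) = ⊤ :=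
  weight_integral_divergent_general n φ hφ hdiv
end

section
/- Let φ ∈ M satisfy ∫₁^∞ dr/(r φ²(r)) < ∞, and let s = 1 + n/2. Then every w ∈ H^{s,s/2;φ}(ℝ^{n+1}) satisfies the sup-norm bound ‖w‖_∞ ≤ C ‖w‖_{H^{s,s/2;φ}} where C² is a constant multiple of ∫₁^∞ dr/(r φ²(r)), via Cauchy–Schwarz applied to ŵ against the weight. -/
open Filter Topology Set MeasureTheory
open scoped ENNReal

lemma my_lintegral_comp_abs (h : ℝ → ℝ≥0∞) (hm : Measurable h) :
    ∫⁻ x : ℝ, h |x| = 2 * ∫⁻ x in Ioi (0:ℝ), h x := by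
  have hcompl : ∫⁻ x : ℝ, h |x| = (∫⁻ x in Iic (0:ℝ), h |x|) + ∫⁻ x in Ioi (0:ℝ), h |x| := by
    rw [← lintegral_add_compl (fun x => h |x|) (measurableSet_Iic (a := (0:ℝ)))]
    congr 1
    · congr 1
      simp [compl_Iic]
  have h1 : ∫⁻ x in Iic (0:ℝ), h |x| = ∫⁻ x in Ioi (0:ℝ), h x := by
    have hneg : ∫⁻ x in (fun x : ℝ => -x) ⁻¹' (Ici (0:ℝ)), h |(-x)| = ∫⁻ x in Ici (0:ℝ), h |x| :=
      (Measure.measurePreserving_neg (volume : Measure ℝ)).setLIntegral_comp_preimage_emb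
        measurableEmbedding_neg (fun x => h |x|) (Ici 0)
    have hpre : (fun x : ℝ => -x) ⁻¹' (Ici (0:ℝ)) = Iic 0 := by ext x; simp
    rw [hpre] at hneg
    simp only [abs_neg] at hneg
    rw [hneg]
    rw [← setLIntegral_congr (Ioi_ae_eq_Ici (μ := (volume : Measure ℝ)) (a := (0:ℝ)))]
    refine setLIntegral_congr_fun measurableSet_Ioi ?_
    intro x hx; beta_reduce; rw [abs_of_pos hx]
  have h2 : ∫⁻ x in Ioi (0:ℝ), h |x| = ∫⁻ x in Ioi (0:ℝ), h x := by
    refine setLIntegral_congr_fun measurableSet_Ioi ?_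
    intro x hx; beta_reduce; rw [abs_of_pos hx]
  rw [hcompl, h1, h2, two_mul]

lemma my_lintegral_shift (h : ℝ → ℝ≥0∞) (a : ℝ) :
    ∫⁻ x in Ioi (0:ℝ), h (a + x) = ∫⁻ t in Ioi a, h t := by
  have hmp : MeasurePreserving (fun x : ℝ => x + a) volume volume :=
    measurePreserving_add_right volume a
  have := hmp.setLIntegral_comp_preimage_emb
    (MeasurableEquiv.addRight a).measurableEmbedding h (Ioi a)
  have hpre : (fun x : ℝ => x + a) ⁻¹' (Ioi a) = Ioi 0 := by ext x; simp
  rw [hpre] at this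
  rw [← this]
  refine lintegral_congr fun x => by rw [add_comm]

lemma my_lintegral_image_deriv {s : Set ℝ} {f f' : ℝ → ℝ} (hs : MeasurableSet s)
    (hf' : ∀ x ∈ s, HasDerivWithinAt f (f' x) s x) (hf : InjOn f s) (g : ℝ → ℝ≥0∞) :
    ∫⁻ x in f '' s, g x = ∫⁻ x in s, ENNReal.ofReal |f' x| * g (f x) := by
  simpa only [ContinuousLinearMap.det_toSpanSingleton] using
    lintegral_image_eq_lintegral_abs_det_fderiv_mul volume hs
      (fun x hx => (hf' x hx).hasFDerivWithinAt) hf g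

lemma sq_image_Ioi : (fun r : ℝ => r ^ 2) '' Ioi 1 = Ioi (1:ℝ) := by
  ext t
  constructor
  · rintro ⟨r, hr, rfl⟩
    have : (1:ℝ) < r := hr
    simpa using one_lt_pow₀ this two_ne_zero
  · intro ht
    refine ⟨Real.sqrt t, ?_, ?_⟩
    · have := Real.lt_sqrt (x := 1) (y := t) zero_le_one
      simp only [one_pow] at this
      exact this.2 ht
    · exact Real.sq_sqrt (le_of_lt (lt_trans one_pos ht))

lemma my_subst (φ : ℝ → ℝ) (hφm : Measurable φ) :
    ∫⁻ t in Ioi (1:ℝ), ENNReal.ofReal (1 / (t * φ (t ^ ((1:ℝ)/2)) ^ 2)) =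
      2 * ∫⁻ r in Ioi (1:ℝ), ENNReal.ofReal (1 / (r * φ r ^ 2)) := by
  have hderiv : ∀ r ∈ Ioi (1:ℝ), HasDerivWithinAt (fun r : ℝ => r ^ 2) (2 * r) (Ioi 1) r := by
    intro r _
    simpa [mul_comm] using (hasDerivAt_pow 2 r).hasDerivWithinAt
  have hinj : InjOn (fun r : ℝ => r ^ 2) (Ioi 1) := by
    intro a ha b hb hab
    have ha0 : (0:ℝ) ≤ a := le_of_lt (lt_trans one_pos ha)
    have hb0 : (0:ℝ) ≤ b := le_of_lt (lt_trans one_pos hb)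
    have hab' : a ^ 2 = b ^ 2 := hab
    calc a = Real.sqrt (a ^ 2) := (Real.sqrt_sq ha0).symm
    _ = Real.sqrt (b ^ 2) := by rw [hab']
    _ = b := Real.sqrt_sq hb0
  have := my_lintegral_image_deriv (f := fun r : ℝ => r ^ 2) (f' := fun r => 2 * r)
    measurableSet_Ioi hderiv hinj (fun t => ENNReal.ofReal (1 / (t * φ (t ^ ((1:ℝ)/2)) ^ 2)))
  rw [sq_image_Ioi] at this
  rw [this]
  rw [← lintegral_const_mul' 2 _ (by norm_num)]
  refine setLIntegral_congr_fun measurableSet_Ioi ?_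
  intro r hr
  beta_reduce
  have hr0 : (0:ℝ) < r := lt_trans one_pos hr
  have hrr : ((r:ℝ) ^ 2) ^ ((1:ℝ)/2) = r := by
    rw [← Real.rpow_natCast r 2, ← Real.rpow_mul hr0.le]
    norm_num
  have h2r : (0:ℝ) < 2 * r := by linarith
  rw [hrr, abs_of_pos h2r, ← ENNReal.ofReal_mul h2r.le,
    (by norm_num : (2 : ℝ≥0∞) = ENNReal.ofReal 2), ← ENNReal.ofReal_mul (by norm_num)]
  congr 1
  rcases eq_or_ne (φ r) 0 with hc | hc
  · simp [hc]
  · field_simp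

section Abound
variable (n : ℕ) (φ : ℝ → ℝ)

noncomputable def Gf (s : ℝ) (φ : ℝ → ℝ) (t : ℝ) : ℝ≥0∞ :=
  ENNReal.ofReal ((t ^ s * φ (t ^ ((1:ℝ)/2)) ^ 2)⁻¹)

lemma measurable_rpow_const {c : ℝ} (hc : 0 ≤ c) : Measurable (fun x : ℝ => x ^ c) :=
  (Real.continuous_rpow_const hc).measurable

lemma Gf_measurable (s : ℝ) (hs : 0 ≤ s) (hφm : Measurable φ) : Measurable (Gf s φ) := by
  apply ENNReal.measurable_ofReal.comp
  apply Measurable.inv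
  exact (measurable_rpow_const hs).mul
    ((hφm.comp (measurable_rpow_const (by norm_num))).pow_const 2)

lemma wt_pos (hφ : MemM φ) (s : ℝ) (q : EuclideanSpace ℝ (Fin n) × ℝ) :
    0 < wt n s φ q := by
  have hu : (1:ℝ) ≤ 1 + ‖q.1‖ ^ 2 + |q.2| := by
    have h1 := sq_nonneg ‖q.1‖
    have h2 := abs_nonneg q.2
    linarith
  have hu0 : (0:ℝ) < 1 + ‖q.1‖ ^ 2 + |q.2| := lt_of_lt_of_le one_pos hu
  have h1 : (1:ℝ) ≤ (1 + ‖q.1‖ ^ 2 + |q.2|) ^ ((1:ℝ)/2) :=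
    Real.one_le_rpow hu (by norm_num)
  have := hφ.2.1 _ h1
  have h2 : (0:ℝ) < (1 + ‖q.1‖ ^ 2 + |q.2|) ^ s := Real.rpow_pos_of_pos hu0 s
  unfold wt
  positivity

lemma A_le (hn : 1 ≤ n) (hφ : MemM φ) :
    ∫⁻ q : EuclideanSpace ℝ (Fin n) × ℝ, (ENNReal.ofReal (wt n (1 + (n:ℝ)/2) φ q))⁻¹ ≤
      4 * volume (Metric.ball (0 : EuclideanSpace ℝ (Fin n)) 1) *
        ∫⁻ r in Ioi (1:ℝ), ENNReal.ofReal (1 / (r * φ r ^ 2)) := by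
  classical
  set s : ℝ := 1 + (n:ℝ)/2 with hs_def
  have hs0 : (0:ℝ) ≤ s := by positivity
  have hG : Measurable (Gf s φ) := Gf_measurable φ s hs0 hφ.1
  set B : ℝ≥0∞ := volume (Metric.ball (0 : EuclideanSpace ℝ (Fin n)) 1) with hB_def
  have hBne : B ≠ ⊤ := (measure_ball_lt_top).ne
  haveI : NeZero n := ⟨by omega⟩
  -- rewrite integrand
  have hpt : ∀ q : EuclideanSpace ℝ (Fin n) × ℝ,
      (ENNReal.ofReal (wt n s φ q))⁻¹ = Gf s φ (1 + ‖q.1‖ ^ 2 + |q.2|) := by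
    intro q
    rw [← ENNReal.ofReal_inv_of_pos (wt_pos n φ hφ s q)]
    rfl
  rw [lintegral_congr hpt]
  have humeas : Measurable (fun q : EuclideanSpace ℝ (Fin n) × ℝ => 1 + ‖q.1‖ ^ 2 + |q.2|) :=
    (measurable_const.add ((measurable_fst.norm).pow_const 2)).add measurable_snd.abs
  rw [Measure.volume_eq_prod, lintegral_prod (fun q => Gf s φ (1 + ‖q.1‖ ^ 2 + |q.2|)) (hG.comp humeas).aemeasurable]
  -- inner integral over η
  have hinner : ∀ ξ : EuclideanSpace ℝ (Fin n),
      ∫⁻ η : ℝ, Gf s φ (1 + ‖ξ‖ ^ 2 + |η|) =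
        2 * ∫⁻ t in Ioi (1:ℝ), (Ioi (1 + ‖ξ‖ ^ 2)).indicator (Gf s φ) t := by
    intro ξ
    have ha : (1:ℝ) ≤ 1 + ‖ξ‖ ^ 2 := by nlinarith [sq_nonneg ‖ξ‖]
    have h1 : ∫⁻ η : ℝ, Gf s φ (1 + ‖ξ‖ ^ 2 + |η|) =
        2 * ∫⁻ η in Ioi (0:ℝ), Gf s φ (1 + ‖ξ‖ ^ 2 + η) :=
      my_lintegral_comp_abs (fun η => Gf s φ (1 + ‖ξ‖ ^ 2 + η))
        (hG.comp (measurable_const.add measurable_id))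
    rw [h1, my_lintegral_shift (Gf s φ) (1 + ‖ξ‖ ^ 2)]
    congr 1
    rw [← lintegral_indicator measurableSet_Ioi, ← lintegral_indicator measurableSet_Ioi,
      Set.indicator_indicator, Set.inter_eq_self_of_subset_right (Ioi_subset_Ioi ha)]
  simp_rw [hinner]
  rw [lintegral_const_mul' 2 _ (by norm_num)]
  -- swap
  set F : EuclideanSpace ℝ (Fin n) × ℝ → ℝ≥0∞ :=
    fun p => {p' : EuclideanSpace ℝ (Fin n) × ℝ | 1 + ‖p'.1‖ ^ 2 < p'.2}.indicator
      (fun p' => Gf s φ p'.2) p with hF_def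
  have hFpt : ∀ (ξ : EuclideanSpace ℝ (Fin n)) (t : ℝ),
      (Ioi (1 + ‖ξ‖ ^ 2)).indicator (Gf s φ) t = F (ξ, t) := by
    intro ξ t
    simp only [hF_def, Set.indicator_apply, mem_Ioi, mem_setOf_eq]
  have hFmeas : Measurable F := by
    apply (hG.comp measurable_snd).indicator
    exact measurableSet_lt (measurable_const.add ((measurable_fst.norm).pow_const 2))
      measurable_snd
  simp_rw [hFpt]
  rw [lintegral_lintegral_swap hFmeas.aemeasurable]
  -- inner integral over ξ
  have hball : ∀ t : ℝ, t ∈ Ioi (1:ℝ) →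
      ∫⁻ ξ : EuclideanSpace ℝ (Fin n), F (ξ, t) ≤
        B * ENNReal.ofReal (1 / (t * φ (t ^ ((1:ℝ)/2)) ^ 2)) := by
    intro t ht
    have ht1 : (1:ℝ) < t := ht
    have ht0 : (0:ℝ) < t := lt_trans one_pos ht1
    have hFx : ∀ ξ : EuclideanSpace ℝ (Fin n),
        F (ξ, t) = (Metric.ball (0 : EuclideanSpace ℝ (Fin n)) (Real.sqrt (t - 1))).indicator
          (fun _ => Gf s φ t) ξ := by
      intro ξ
      simp only [hF_def, Set.indicator_apply, mem_setOf_eq, Metric.mem_ball, dist_zero_right]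
      congr 1
      rw [eq_iff_iff]
      constructor
      · intro h
        rw [Real.lt_sqrt (norm_nonneg ξ)]
        linarith
      · intro h
        rw [Real.lt_sqrt (norm_nonneg ξ)] at h
        linarith
    simp_rw [hFx]
    rw [lintegral_indicator_const measurableSet_ball]
    rw [Measure.addHaar_ball volume (0 : EuclideanSpace ℝ (Fin n)) (Real.sqrt_nonneg (t-1)),
      finrank_euclideanSpace_fin]
    -- now the real-number bound
    have hφpos : 0 < φ (t ^ ((1:ℝ)/2)) := hφ.2.1 _ (Real.one_le_rpow ht1.le (by norm_num))
    set c : ℝ := φ (t ^ ((1:ℝ)/2)) ^ 2 with hc_def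
    have hc : 0 < c := by positivity
    have hsqt : Real.sqrt t ^ n = t ^ ((n:ℝ)/2) := by
      rw [Real.sqrt_eq_rpow, ← Real.rpow_natCast (t ^ ((1:ℝ)/2)) n, ← Real.rpow_mul ht0.le]
      congr 1
      ring
    have hts : t ^ s = t * Real.sqrt t ^ n := by
      rw [hsqt, hs_def, Real.rpow_add ht0, Real.rpow_one]
    have key : Real.sqrt (t-1) ^ n ≤ Real.sqrt t ^ n :=
      pow_le_pow_left₀ (Real.sqrt_nonneg _) (Real.sqrt_le_sqrt (by linarith)) n
    have hst : 0 < Real.sqrt t ^ n := pow_pos (Real.sqrt_pos.mpr ht0) n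
    have hreal : (t ^ s * c)⁻¹ * Real.sqrt (t-1) ^ n ≤ 1 / (t * c) := by
      have h1 : (t ^ s * c)⁻¹ * Real.sqrt (t-1) ^ n
          = Real.sqrt (t-1) ^ n / (t * Real.sqrt t ^ n * c) := by
        rw [hts]; ring
      have h2 : (1:ℝ) / (t * c) = Real.sqrt t ^ n / (t * Real.sqrt t ^ n * c) := by
        field_simp
      rw [h1, h2]
      gcongr
    calc Gf s φ t * (ENNReal.ofReal (Real.sqrt (t-1) ^ n) * B)
        = (ENNReal.ofReal ((t ^ s * c)⁻¹) * ENNReal.ofReal (Real.sqrt (t-1) ^ n)) * B := by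
          rw [Gf]; ring
      _ = ENNReal.ofReal ((t ^ s * c)⁻¹ * Real.sqrt (t-1) ^ n) * B := by
          rw [ENNReal.ofReal_mul (inv_nonneg.mpr
            (mul_nonneg (Real.rpow_nonneg ht0.le s) hc.le))]
      _ ≤ ENNReal.ofReal (1 / (t * c)) * B := by
          exact mul_le_mul_left (ENNReal.ofReal_le_ofReal hreal) B
      _ = B * ENNReal.ofReal (1 / (t * c)) := mul_comm _ _
  calc 2 * ∫⁻ t in Ioi (1:ℝ), ∫⁻ ξ : EuclideanSpace ℝ (Fin n), F (ξ, t)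
      ≤ 2 * ∫⁻ t in Ioi (1:ℝ), B * ENNReal.ofReal (1 / (t * φ (t ^ ((1:ℝ)/2)) ^ 2)) := by
        refine mul_le_mul_right (setLIntegral_mono ?_ hball) 2
        exact measurable_const.mul (ENNReal.measurable_ofReal.comp
          (measurable_const.div (measurable_id.mul
            ((hφ.1.comp (measurable_rpow_const (c := (1:ℝ)/2) (by norm_num))).pow_const 2))))
    _ = 2 * (B * ∫⁻ t in Ioi (1:ℝ), ENNReal.ofReal (1 / (t * φ (t ^ ((1:ℝ)/2)) ^ 2))) := by
        rw [lintegral_const_mul' B _ hBne]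
    _ = 2 * (B * (2 * ∫⁻ r in Ioi (1:ℝ), ENNReal.ofReal (1 / (r * φ r ^ 2)))) := by
        rw [my_subst φ hφ.1]
    _ = 4 * B * ∫⁻ r in Ioi (1:ℝ), ENNReal.ofReal (1 / (r * φ r ^ 2)) := by ring

end Abound

/-- The squared `H^{s,s/2;φ}`-norm of a distribution given by its Fourier
transform `W(ξ,η)`, `ξ ∈ ℝⁿ`, `η ∈ ℝ`. -/
noncomputable def Hnorm2 (n : ℕ) (s : ℝ) (φ : ℝ → ℝ)
    (W : EuclideanSpace ℝ (Fin n) × ℝ → ℂ) : ℝ≥0∞ :=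
  ∫⁻ q, ENNReal.ofReal (wt n s φ q * ‖W q‖ ^ 2)

/-- sup-norm bound. For `s = 1 + n/2` and `φ ∈ M` with
`∫₁^∞ dr/(r φ²) < ∞`, the continuous representative of `w` (the inverse Fourier
integral of `ŵ = W`) satisfies `‖w‖_∞² ≤ K · (∫₁^∞ dr/(r φ²)) · ‖w‖²_{H^{s,s/2;φ}}`,
by Cauchy–Schwarz. -/
theorem sup_norm_bound (n : ℕ) (hn : 1 ≤ n) (φ : ℝ → ℝ) (hφ : MemM φ)
    (hint : ∫⁻ r in Ioi (1:ℝ), ENNReal.ofReal (1 / (r * φ r ^ 2)) < ⊤) :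
    ∃ K > (0:ℝ), ∀ W : EuclideanSpace ℝ (Fin n) × ℝ → ℂ, Measurable W →
      Hnorm2 n (1 + (n : ℝ) / 2) φ W < ⊤ →
      ∀ x : EuclideanSpace ℝ (Fin n) × ℝ,
        ‖∫ q : EuclideanSpace ℝ (Fin n) × ℝ,
            Complex.exp (2 * Real.pi * Complex.I *
              (((inner ℝ x.1 q.1 : ℝ) + x.2 * q.2 : ℝ) : ℂ)) * W q‖ ^ 2 ≤
          K * (∫⁻ r in Ioi (1:ℝ), ENNReal.ofReal (1 / (r * φ r ^ 2))).toReal *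
            (Hnorm2 n (1 + (n : ℝ) / 2) φ W).toReal := by
  classical
  set s : ℝ := 1 + (n:ℝ)/2 with hs_def
  have hs0 : (0:ℝ) ≤ s := by positivity
  set I : ℝ≥0∞ := ∫⁻ r in Ioi (1:ℝ), ENNReal.ofReal (1 / (r * φ r ^ 2)) with hI_def
  haveI : NeZero n := ⟨by omega⟩
  set B : ℝ≥0∞ := volume (Metric.ball (0 : EuclideanSpace ℝ (Fin n)) 1) with hB_def
  have hB0 : B ≠ 0 := (Metric.measure_ball_pos volume _ one_pos).ne'
  have hBne : B ≠ ⊤ := measure_ball_lt_top.ne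
  have hK0 : (0:ℝ) < 4 * B.toReal := by
    have := ENNReal.toReal_pos hB0 hBne
    linarith
  refine ⟨4 * B.toReal, hK0, ?_⟩
  intro W hW hH x
  set H : ℝ≥0∞ := Hnorm2 n s φ W with hH_def
  set A : ℝ≥0∞ := ∫⁻ q : EuclideanSpace ℝ (Fin n) × ℝ, (ENNReal.ofReal (wt n s φ q))⁻¹
    with hA_def
  have hA : A ≤ 4 * B * I := A_le n φ hn hφ
  have h4BI : 4 * B * I ≠ ⊤ := by
    refine ENNReal.mul_ne_top (ENNReal.mul_ne_top (by norm_num) hBne) hint.ne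
  have hAne : A ≠ ⊤ := (lt_of_le_of_lt hA (lt_of_le_of_ne le_top h4BI)).ne
  set f : EuclideanSpace ℝ (Fin n) × ℝ → ℂ := fun q =>
    Complex.exp (2 * Real.pi * Complex.I *
      (((inner ℝ x.1 q.1 : ℝ) + x.2 * q.2 : ℝ) : ℂ)) * W q with hf_def
  have hfnorm : ∀ q, ‖f q‖ = ‖W q‖ := by
    intro q
    rw [hf_def, norm_mul]
    have : ‖Complex.exp (2 * Real.pi * Complex.I *
        (((inner ℝ x.1 q.1 : ℝ) + x.2 * q.2 : ℝ) : ℂ))‖ = 1 := by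
      rw [Complex.norm_exp]
      have : (2 * (Real.pi:ℂ) * Complex.I *
          (((inner ℝ x.1 q.1 : ℝ) + x.2 * q.2 : ℝ) : ℂ)).re = 0 := by
        simp [Complex.mul_re, Complex.mul_im]
      rw [this, Real.exp_zero]
    rw [this, one_mul]
  -- the weight as an ℝ≥0∞ function
  set wf : EuclideanSpace ℝ (Fin n) × ℝ → ℝ≥0∞ := fun q => ENNReal.ofReal (wt n s φ q)
    with hwf_def
  have hw0 : ∀ q, wf q ≠ 0 := fun q => by
    simp only [hwf_def, ne_eq, ENNReal.ofReal_eq_zero, not_le]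
    exact wt_pos n φ hφ s q
  have hwt : ∀ q, wf q ≠ ⊤ := fun q => ENNReal.ofReal_ne_top
  have hwmeas : Measurable wf := by
    apply ENNReal.measurable_ofReal.comp
    have humeas : Measurable (fun q : EuclideanSpace ℝ (Fin n) × ℝ => 1 + ‖q.1‖ ^ 2 + |q.2|) :=
      (measurable_const.add ((measurable_fst.norm).pow_const 2)).add measurable_snd.abs
    exact ((measurable_rpow_const hs0).comp humeas).mul
      (((hφ.1.comp ((measurable_rpow_const (by norm_num)).comp humeas)).pow_const 2))
  set N : ℝ≥0∞ := ∫⁻ q, (‖W q‖₊ : ℝ≥0∞) with hN_def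
  -- Cauchy–Schwarz
  have hCS : N ≤ A ^ ((1:ℝ)/2) * H ^ ((1:ℝ)/2) := by
    have hconj : Real.HolderConjugate 2 2 := Real.HolderConjugate.two_two
    have hfm : AEMeasurable (fun q => (wf q) ^ (-(1:ℝ)/2)) volume :=
      (hwmeas.pow_const _).aemeasurable
    have hgm : AEMeasurable (fun q => (wf q) ^ ((1:ℝ)/2) * (‖W q‖₊ : ℝ≥0∞)) volume :=
      ((hwmeas.pow_const _).mul hW.nnnorm.coe_nnreal_ennreal).aemeasurable
    have := ENNReal.lintegral_mul_le_Lp_mul_Lq volume hconj hfm hgm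
    have heq : ∀ q : EuclideanSpace ℝ (Fin n) × ℝ,
        ((fun q => (wf q) ^ (-(1:ℝ)/2)) * fun q => (wf q) ^ ((1:ℝ)/2) * (‖W q‖₊ : ℝ≥0∞)) q
          = (‖W q‖₊ : ℝ≥0∞) := by
      intro q
      simp only [Pi.mul_apply]
      rw [← mul_assoc, ← ENNReal.rpow_add _ _ (hw0 q) (hwt q)]
      norm_num
    have hA2 : ∫⁻ q, ((wf q) ^ (-(1:ℝ)/2)) ^ (2:ℝ) = A := by
      refine lintegral_congr fun q => ?_
      rw [← ENNReal.rpow_mul]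
      norm_num
      exact ENNReal.rpow_neg_one _
    have hH2 : ∫⁻ q, ((wf q) ^ ((1:ℝ)/2) * (‖W q‖₊ : ℝ≥0∞)) ^ (2:ℝ) = H := by
      rw [hH_def]
      simp only [Hnorm2]
      refine lintegral_congr fun q => ?_
      rw [ENNReal.mul_rpow_of_nonneg _ _ (by norm_num), ← ENNReal.rpow_mul]
      rw [ENNReal.ofReal_mul (wt_pos n φ hφ s q).le,
        ENNReal.ofReal_pow (norm_nonneg (W q)), ← coe_nnnorm, ENNReal.ofReal_coe_nnreal]
      norm_num
      rfl
    rw [lintegral_congr heq, hA2, hH2] at this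
    exact this
  by_cases hf : Integrable f
  · have h1 : ‖∫ q, f q‖ ≤ ∫ q, ‖f q‖ := norm_integral_le_integral_norm f
    have hNW : ∀ q : EuclideanSpace ℝ (Fin n) × ℝ, (‖f q‖₊ : ℝ≥0∞) = (‖W q‖₊ : ℝ≥0∞) := by
      intro q
      rw [show ‖f q‖₊ = ‖W q‖₊ from NNReal.eq (hfnorm q)]
    have h2 : ∫ q, ‖f q‖ = N.toReal := by
      rw [integral_norm_eq_lintegral_enorm hf.1, hN_def]
      congr 1
      exact lintegral_congr hNW
    have h3 : ‖∫ q, f q‖ ≤ N.toReal := h1.trans (le_of_eq h2)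
    have h4 : ‖∫ q, f q‖ ^ 2 ≤ N.toReal ^ 2 := by
      have := norm_nonneg (∫ q, f q)
      nlinarith
    have hNne : N ≠ ⊤ := by
      have h9 : ∫⁻ q, (‖f q‖₊ : ℝ≥0∞) < ⊤ := hf.2
      rw [hN_def, ← lintegral_congr hNW]
      exact h9.ne
    have hN2 : N ^ 2 ≤ A * H := by
      have hsq : ∀ y : ℝ≥0∞, y ^ ((1:ℝ)/2) * y ^ ((1:ℝ)/2) = y := by
        intro y
        rw [← ENNReal.rpow_add_of_nonneg _ _ (by norm_num) (by norm_num)]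
        norm_num
      calc N ^ 2 = N * N := sq N
        _ ≤ (A ^ ((1:ℝ)/2) * H ^ ((1:ℝ)/2)) * (A ^ ((1:ℝ)/2) * H ^ ((1:ℝ)/2)) :=
            mul_le_mul' hCS hCS
        _ = (A ^ ((1:ℝ)/2) * A ^ ((1:ℝ)/2)) * (H ^ ((1:ℝ)/2) * H ^ ((1:ℝ)/2)) := by ring
        _ = A * H := by rw [hsq, hsq]
    have hAH : A * H ≠ ⊤ := ENNReal.mul_ne_top hAne hH.ne
    have h6 : (N ^ 2).toReal ≤ A.toReal * H.toReal := by
      rw [← ENNReal.toReal_mul]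
      exact ENNReal.toReal_mono hAH hN2
    have h8 : A.toReal ≤ 4 * B.toReal * I.toReal := by
      have h := ENNReal.toReal_mono h4BI hA
      rw [ENNReal.toReal_mul, ENNReal.toReal_mul] at h
      simpa using h
    calc ‖∫ q, f q‖ ^ 2 ≤ N.toReal ^ 2 := h4
      _ = (N ^ 2).toReal := by rw [ENNReal.toReal_pow]
      _ ≤ A.toReal * H.toReal := h6
      _ ≤ (4 * B.toReal * I.toReal) * H.toReal :=
          mul_le_mul_of_nonneg_right h8 ENNReal.toReal_nonneg
      _ = 4 * B.toReal * I.toReal * H.toReal := by ring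
  · rw [integral_undef hf]
    simp only [norm_zero, ne_eq]
    have : (0:ℝ) ≤ 4 * B.toReal * I.toReal * H.toReal := by positivity
    nlinarith
end
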